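/- Let q be a prime power, l ≥ 1, r = p^t a power of the characteristic p of 𝔽_q, and a_1,...,a_l ∈ 𝔽_q[T] of positive degree. Let α ∈ 𝔽_q((1/T)) be the continued fraction [a_1,...,a_l, a_1^r,...,a_l^r, a_1^{r²},..., a_l^{r²}, ...]. Then α satisfies α = (x_l·α^r + x_{l-1})/(y_l·α^r + y_{l-1}), where x_k = ⟨a_1,...,a_k⟩ and y_k = ⟨a_2,...,a_k⟩. -/

import Mathlib

/-!
Frobenius `u ↦ u ^ r` is a field endomorphism of `𝔽_q((1/T))`, so `α ^ r` has partial quotients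
`a₁ ^ r, a₂ ^ r, …`, exactly those of the `(l+1)`-th complete quotient `α_{l+1}` of `α`. Expansions
whose complete quotients all have absolute value `> 1` are unique: the difference of two such tails
grows by a factor `|T|²` at each step, yet always has absolute value `< 1`. Hence `α_{l+1} = α ^ r`,
and the classical relation `α = (x_l α_{l+1} + x_{l-1}) / (y_l α_{l+1} + y_{l-1})`, whose
denominator cannot vanish because `x_l y_{l-1} - x_{l-1} y_l = ±1`, gives the claim.
-/

def cont {R : Type*} [CommRing R] : List R → R
  | [] => 1
  | [a] => a
  | a :: b :: l => a * cont (b :: l) + cont l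

section Continuant

variable {R : Type*} [CommRing R]

theorem cont_append_pair : ∀ (L : List R) (b c : R),
    cont (L ++ [b, c]) = cont (L ++ [b]) * c + cont L
  | [], b, c => by simp [cont]
  | [a], b, c => by simp only [List.cons_append, List.nil_append, cont]; ring
  | a :: d :: L, b, c => by
    have hd := cont_append_pair (d :: L) b c
    have hL := cont_append_pair L b c
    simp only [List.cons_append] at hd ⊢
    rw [cont, cont, hd, hL, cont]
    ring

theorem cont_map_range'_add_two (f : ℕ → R) (s j : ℕ) :
    cont ((List.range' s (j + 2)).map f)
      = cont ((List.range' s (j + 1)).map f) * f (s + j + 1) + cont ((List.range' s j).map f) := by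
  have h2 : List.range' s (j + 2) = List.range' s j ++ [s + j, s + j + 1] := by
    simp [List.range'_concat, add_assoc]
  rw [h2, List.range'_concat, List.map_append, List.map_append, one_mul]
  exact cont_append_pair _ _ _

def IsContinuantSeq (f u : ℕ → R) : Prop :=
  ∀ j, u (j + 2) = u (j + 1) * f (j + 2) + u j

theorem isContinuantSeq_of_eq_cont_range'_one {f x : ℕ → R}
    (hx : ∀ k, x k = cont ((List.range' 1 k).map f)) : IsContinuantSeq f x := by
  intro j
  rw [hx, hx, hx, cont_map_range'_add_two, show 1 + j + 1 = j + 2 by omega]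

theorem isContinuantSeq_of_eq_cont_range'_two {f y : ℕ → R} (hy0 : y 0 = 0)
    (hy : ∀ k, y (k + 1) = cont ((List.range' 2 k).map f)) : IsContinuantSeq f y
  | 0 => by simp [hy, hy0, cont]
  | j + 1 => by rw [hy, hy, hy, cont_map_range'_add_two]; ring_nf

theorem IsContinuantSeq.casoratian {f u v : ℕ → R} (hu : IsContinuantSeq f u)
    (hv : IsContinuantSeq f v) :
    ∀ k, u (k + 1) * v k - u k * v (k + 1) = (-1) ^ k * (u 1 * v 0 - u 0 * v 1)
  | 0 => by ring
  | k + 1 => by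
    rw [hu k, hv k, pow_succ]
    linear_combination (-1 : R) * IsContinuantSeq.casoratian hu hv k

end Continuant

section ConvergentRelation

variable {K : Type*} [Field K] {f x y β : ℕ → K}

theorem IsContinuantSeq.convergent_step {u : ℕ → K} (hu : IsContinuantSeq f u) {k : ℕ}
    (hβ : β (k + 2) = f (k + 2) + (β (k + 3))⁻¹) (hne : β (k + 3) ≠ 0) :
    u (k + 2) * β (k + 3) + u (k + 1) = β (k + 3) * (u (k + 1) * β (k + 2) + u k) := by
  rw [hu k, hβ]
  field_simp
  ring

theorem IsContinuantSeq.mul_convergent_eq (hx : IsContinuantSeq f x) (hx0 : x 0 = 1)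
    (hx1 : x 1 = f 1) (hy : IsContinuantSeq f y) (hy0 : y 0 = 0) (hy1 : y 1 = 1) :
    ∀ k, (∀ m, 1 ≤ m → m ≤ k + 1 → β m = f m + (β (m + 1))⁻¹) →
      (∀ m, 1 ≤ m → m ≤ k + 1 → β (m + 1) ≠ 0) →
      β 1 * (y (k + 1) * β (k + 2) + y k) = x (k + 1) * β (k + 2) + x k
  | 0, hβ, hne => by
    rw [hx0, hx1, hy0, hy1, hβ 1 le_rfl le_rfl]
    field_simp [hne 1 le_rfl le_rfl]
    ring
  | k + 1, hβ, hne => by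
    have ih := IsContinuantSeq.mul_convergent_eq hx hx0 hx1 hy hy0 hy1 k
      (fun m h1 _ => hβ m h1 (by omega)) (fun m h1 _ => hne m h1 (by omega))
    have hβk := hβ (k + 2) (by omega) le_rfl
    have hnek := hne (k + 2) (by omega) le_rfl
    rw [hx.convergent_step hβk hnek, hy.convergent_step hβk hnek, ← ih]
    ring

theorem eq_div_of_mul_eq_of_sub_ne_zero {a b x₀ x₁ y₀ y₁ : K}
    (h : a * (y₁ * b + y₀) = x₁ * b + x₀) (hdet : x₁ * y₀ - x₀ * y₁ ≠ 0) :
    a = (x₁ * b + x₀) / (y₁ * b + y₀) := by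
  have hden : y₁ * b + y₀ ≠ 0 := by
    intro h0
    have hnum : x₁ * b + x₀ = 0 := by rw [← h, h0, mul_zero]
    exact hdet (by linear_combination x₁ * h0 - y₁ * hnum)
  rw [eq_div_iff hden, h]

end ConvergentRelation

namespace LaurentSeries

open scoped LaurentSeries

variable {K : Type*} [Field K]

theorem order_inv {u : K⸨X⸩} (hu : u ≠ 0) : u⁻¹.order = -u.order := by
  have h := HahnSeries.order_mul hu (inv_ne_zero hu)
  rw [mul_inv_cancel₀ hu, HahnSeries.order_one] at h
  omega

theorem order_inv_sub_inv {u v : K⸨X⸩} (hu : u ≠ 0) (hv : v ≠ 0) (huv : u - v ≠ 0) :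
    (u⁻¹ - v⁻¹).order = (u - v).order - u.order - v.order := by
  rw [show u⁻¹ - v⁻¹ = -(u - v) * (u * v)⁻¹ by field_simp; ring,
    HahnSeries.order_mul (neg_ne_zero.mpr huv) (inv_ne_zero (mul_ne_zero hu hv)),
    HahnSeries.order_neg, order_inv (mul_ne_zero hu hv), HahnSeries.order_mul hu hv]
  ring

theorem min_order_le_order_sub {u v : K⸨X⸩} (huv : u - v ≠ 0) :
    min u.order v.order ≤ (u - v).order := by
  rw [sub_eq_add_neg] at huv ⊢
  simpa only [HahnSeries.order_neg] using HahnSeries.min_order_le_order_add huv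

theorem eq_of_complete_quotients {c β γ : ℕ → K⸨X⸩}
    (hβ : ∀ m, β m = c m + (β (m + 1))⁻¹) (hγ : ∀ m, γ m = c m + (γ (m + 1))⁻¹)
    (hβo : ∀ m, (β (m + 1)).order < 0) (hγo : ∀ m, (γ (m + 1)).order < 0) : β 0 = γ 0 := by
  have hβ0 m : β (m + 1) ≠ 0 := fun h => by simpa [h] using hβo m
  have hγ0 m : γ (m + 1) ≠ 0 := fun h => by simpa [h] using hγo m
  have hδ m : β m - γ m = (β (m + 1))⁻¹ - (γ (m + 1))⁻¹ := by rw [hβ m, hγ m]; ring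
  by_contra h0
  have hne m : β m - γ m ≠ 0 := by
    induction m with
    | zero => exact sub_ne_zero.mpr h0
    | succ m ih =>
      intro h
      rw [hδ m, sub_eq_zero.mp h, sub_self] at ih
      exact ih rfl
  have hord m : (β m - γ m).order =
      (β (m + 1) - γ (m + 1)).order - (β (m + 1)).order - (γ (m + 1)).order := by
    rw [hδ, order_inv_sub_inv (hβ0 m) (hγ0 m) (hne (m + 1))]
  have hpos m : 1 ≤ (β m - γ m).order := by
    have hmin := min_order_le_order_sub (hne (m + 1))
    rw [hord]
    cases min_cases (β (m + 1)).order (γ (m + 1)).order <;> linarith [hβo m, hγo m]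
  have hdecr m : (β m - γ m).order + 2 * m ≤ (β 0 - γ 0).order := by
    induction m with
    | zero => simp
    | succ m ih =>
      push_cast
      linarith [hord m, hβo m, hγo m]
  set N := (β 0 - γ 0).order.toNat
  linarith [hdecr N, hpos N, Int.self_le_toNat (β 0 - γ 0).order]

theorem complete_quotient_eq_pow_of_periodic {p t l : ℕ} [ExpChar K p] {d αq : ℕ → K⸨X⸩}
    (hd : ∀ m, 1 ≤ m → d (m + l) = d m ^ p ^ t)
    (hcf : ∀ m, 1 ≤ m → αq m = d m + (αq (m + 1))⁻¹)
    (hord : ∀ m, 1 ≤ m → (αq (m + 1)).order < 0) :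
    αq (l + 1) = αq 1 ^ p ^ t := by
  have := expChar_of_injective_algebraMap (algebraMap K K⸨X⸩).injective p
  have hq : 0 < p ^ t := expChar_pow_pos K p t
  rw [add_comm]
  refine (eq_of_complete_quotients (c := fun m => d (m + 1 + l))
    (β := fun m => αq (m + 1) ^ p ^ t) (γ := fun m => αq (m + 1 + l)) (fun m => ?_)
    (fun m => ?_) (fun m => ?_) (fun m => ?_)).symm
  · rw [hcf (m + 1) (by omega), add_pow_expChar_pow, inv_pow, hd (m + 1) (by omega)]
  · rw [show m + 1 + 1 + l = m + 1 + l + 1 by omega, ← hcf (m + 1 + l) (by omega)]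
  · rw [HahnSeries.order_pow, nsmul_eq_mul]
    exact mul_neg_of_pos_of_neg (by exact_mod_cast hq) (hord (m + 1) (by omega))
  · rw [add_right_comm]
    exact hord (m + 1 + l) (by omega)

end LaurentSeries

theorem schmidt_hyperquadratic_general (Fq : Type*) [Field Fq]
    (p : ℕ) (hp : p.Prime) [CharP Fq p] (t : ℕ) (r : ℕ) (hr : r = p ^ t)
    (l : ℕ) (hl : 1 ≤ l)
    (a : ℕ → Polynomial Fq)
    (T : LaurentSeries Fq)
    (α : LaurentSeries Fq) (αq : ℕ → LaurentSeries Fq) (hα1 : αq 1 = α)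
    (hcf : ∀ m, 1 ≤ m →
      αq m = Polynomial.aeval T ((a ((m - 1) % l + 1)) ^ r ^ ((m - 1) / l))
        + (αq (m + 1))⁻¹)
    (hord : ∀ m, 1 ≤ m → αq (m + 1) ≠ 0 ∧ (αq (m + 1)).order < 0)
    (x y : ℕ → LaurentSeries Fq)
    (hx : ∀ k, x k = cont (List.map (fun i => Polynomial.aeval T (a i)) (List.range' 1 k)))
    (hy0 : y 0 = 0)
    (hy : ∀ k, y (k + 1) = cont (List.map (fun i => Polynomial.aeval T (a i)) (List.range' 2 k))) :
    α = (x l * α ^ r + x (l - 1)) / (y l * α ^ r + y (l - 1)) := by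
  have : Fact p.Prime := ⟨hp⟩
  have hperiod : αq (l + 1) = α ^ r := by
    rw [← hα1, hr]
    refine LaurentSeries.complete_quotient_eq_pow_of_periodic (fun m hm => ?_) hcf
      (fun m hm => (hord m hm).2)
    rw [← hr, ← map_pow, ← pow_mul, ← pow_succ, show m + l - 1 = m - 1 + l by omega,
      Nat.add_mod_right, Nat.add_div_right _ (by omega)]
  have hdigit : ∀ m, 1 ≤ m → m ≤ l → αq m = Polynomial.aeval T (a m) + (αq (m + 1))⁻¹ := by
    intro m h1 h2
    rw [hcf m h1, Nat.div_eq_of_lt (by omega), Nat.mod_eq_of_lt (by omega),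
      Nat.sub_add_cancel h1, pow_zero, pow_one]
  obtain ⟨k, rfl⟩ : ∃ k, l = k + 1 := ⟨l - 1, by omega⟩
  have hxs := isContinuantSeq_of_eq_cont_range'_one hx
  have hys := isContinuantSeq_of_eq_cont_range'_two hy0 hy
  have hrel := hxs.mul_convergent_eq (by simp [hx, cont]) (by simp [hx, cont]) hys hy0
    (by simp [hy, cont]) k hdigit (fun m hm _ => (hord m hm).1)
  rw [hα1, hperiod] at hrel
  refine eq_div_of_mul_eq_of_sub_ne_zero hrel ?_
  rw [Nat.add_sub_cancel, hxs.casoratian hys]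
  simp [hx, hy0, hy, cont]

/-- Schmidt's example: let `𝔽_q` be a finite field of characteristic `p`,
`r = p^t`, `l ≥ 1`, and `a₁,...,a_l ∈ 𝔽_q[T]` of positive degree.  Let
`α ∈ 𝔽_q((1/T))` (modelled as Laurent series in `X = 1/T`) be the continued
fraction `[a₁,...,a_l, a₁^r,...,a_l^r, a₁^{r²},...]`, encoded by its sequence of
complete quotients `αq` (with `αq 1 = α`, `αq m = a'_m + 1/αq (m+1)` where
`a'_m = a_{((m-1) mod l)+1}^{r^{⌊(m-1)/l⌋}}`, and `|αq (m+1)| > 1`, i.e. its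
order in `X` is negative).  Then `α = (x_l·α^r + x_{l-1})/(y_l·α^r + y_{l-1})`,
where `x_k = ⟨a₁,...,a_k⟩` and `y_k = ⟨a₂,...,a_k⟩`. -/
theorem schmidt_hyperquadratic (Fq : Type*) [Field Fq] [Fintype Fq]
    (p : ℕ) (hp : p.Prime) [CharP Fq p] (t : ℕ) (r : ℕ) (hr : r = p ^ t)
    (l : ℕ) (hl : 1 ≤ l)
    (a : ℕ → Polynomial Fq) (ha : ∀ i, 1 ≤ i → i ≤ l → 1 ≤ (a i).natDegree)
    (T : LaurentSeries Fq)
    (hT : T = ((PowerSeries.X : PowerSeries Fq) : LaurentSeries Fq)⁻¹)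
    (α : LaurentSeries Fq) (αq : ℕ → LaurentSeries Fq) (hα1 : αq 1 = α)
    (hcf : ∀ m, 1 ≤ m →
      αq m = Polynomial.aeval T ((a ((m - 1) % l + 1)) ^ r ^ ((m - 1) / l))
        + (αq (m + 1))⁻¹)
    (hord : ∀ m, 1 ≤ m → αq (m + 1) ≠ 0 ∧ (αq (m + 1)).order < 0)
    (x y : ℕ → LaurentSeries Fq)
    (hx : ∀ k, x k = cont (List.map (fun i => Polynomial.aeval T (a i)) (List.range' 1 k)))
    (hy0 : y 0 = 0)
    (hy : ∀ k, y (k + 1) = cont (List.map (fun i => Polynomial.aeval T (a i)) (List.range' 2 k))) :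
    α = (x l * α ^ r + x (l - 1)) / (y l * α ^ r + y (l - 1)) :=
  schmidt_hyperquadratic_general Fq p hp t r hr l hl a T α αq hα1 hcf hord x y hx hy0 hy
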